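/- arXiv:1902.09620 — 5 statements merged into one kernel-verified Lean document; each statement's English description precedes it below -/
import Mathlib

section
/- Let F be a field with char(F) ≠ 2 and G a group with involution * extended to FG. If FG is normal, then g² is central in G for every g ∈ G. -/
/-- The F-linear extension of a group involution `st` to the group algebra. -/
noncomputable def invMap {F G : Type*} [Field F] [Group G] (st : G → G) :
    MonoidAlgebra F G → MonoidAlgebra F G :=
  fun α => MonoidAlgebra.mapDomain st α

/-!
Normality of `FG` at a group element `x` gives `x x* = x* x`; at `x + y`, after cancelling these
terms, it gives `x y* + y x* = x* y + y* x`, so (as `2 ≠ 0` in `F`) `x y* = x* y` or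
`x y* = y* x`.
For noncommuting `g, h` the dichotomy for the pairs `(g, h*)` and `(gh, h*)` can only take its
first branch, and with `g g* = g* g` this forces `g* h = h g`. Applied to the pairs `(h, g)` and
`(h, g⁻¹)` it gives `h* = g h g⁻¹ = g⁻¹ h g`, i.e. `g²` commutes with `h`.
-/

open MonoidAlgebra

section GroupAlgebra

variable {F G : Type*} [Field F] [Group G] {st : G → G}

lemma invMap_single (x : G) (r : F) : invMap st (single x r) = single (st x) r :=
  mapDomain_single

lemma invMap_add (α β : MonoidAlgebra F G) :
    invMap st (α + β) = invMap st α + invMap st β :=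
  mapDomain_add st α β

variable (hnormal : ∀ α : MonoidAlgebra F G, α * invMap st α = invMap st α * α)
include hnormal

lemma mul_st_comm_of_normal (x : G) : x * st x = st x * x := by
  have h := hnormal (single x 1)
  rw [invMap_single, single_mul_single, single_mul_single, mul_one] at h
  exact single_left_injective one_ne_zero h

lemma mul_st_eq_or_of_normal (h2 : (2 : F) ≠ 0) (x y : G) :
    x * st y = st x * y ∨ x * st y = st y * x := by
  have hxy : single (x * st y) (1 : F) + single (y * st x) 1
      = single (st x * y) 1 + single (st y * x) 1 := by
    have h := hnormal (single x 1 + single y 1)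
    simp only [invMap_add, invMap_single, mul_add, add_mul, single_mul_single, mul_one,
      mul_st_comm_of_normal hnormal x, mul_st_comm_of_normal hnormal y] at h
    refine add_left_cancel (a := single (st x * x) 1)
      (add_right_cancel (b := single (st y * y) 1) ?_)
    convert h using 1 <;> abel
  rcases (single_add_single_inj one_ne_zero one_ne_zero).mp hxy with
    ⟨h, -⟩ | ⟨-, h, -⟩ | ⟨h, -⟩
  · exact Or.inl h
  · exact Or.inr h
  · exact absurd (one_add_one_eq_two.symm.trans h) h2

end GroupAlgebra

section Group

variable {G : Type*} [Group G] {st : G → G}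
  (hanti : ∀ g h : G, st (g * h) = st h * st g) (hinvol : ∀ g : G, st (st g) = g)
  (hdich : ∀ x y : G, x * st y = st x * y ∨ x * st y = st y * x)
include hanti hinvol hdich

lemma st_mul_eq_mul_of_mul_ne {g h : G} (hne : g * h ≠ h * g) : st g * h = h * g := by
  have hcomm : g * st g = st g * g := (hdich g g).elim id id
  have hgh : g * h = st g * st h := by
    simpa only [hinvol, hne, or_false] using hdich g (st h)
  have hghh : g * h * h = st h * st g * st h := by
    have hne' : g * h * h ≠ h * (g * h) := fun e =>
      hne (mul_right_cancel (e.trans (mul_assoc _ _ _).symm))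
    simpa only [hinvol, hanti, hne', or_false] using hdich (g * h) (st h)
  have hghg : st g * g * h = g * h * g := by
    refine mul_right_cancel (b := h) ?_
    calc st g * g * h * h = st g * (g * h * h) := by group
      _ = (st g * st h) * (st g * st h) := by rw [hghh]; group
      _ = g * h * g * h := by rw [← hgh]; group
  refine mul_left_cancel (a := g) ?_
  calc g * (st g * h) = st g * g * h := by rw [← mul_assoc, hcomm]
    _ = g * (h * g) := by rw [hghg]; group

lemma sq_mem_center_of_mul_st_dichotomy (g : G) : g ^ 2 ∈ Subgroup.center G := by
  refine Subgroup.mem_center_iff.mpr fun h => ?_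
  by_cases hc : Commute h g
  · exact (hc.pow_right 2).eq
  have h₁ : st h * g = g * h := st_mul_eq_mul_of_mul_ne hanti hinvol hdich hc
  have h₂ : st h * g⁻¹ = g⁻¹ * h :=
    st_mul_eq_mul_of_mul_ne hanti hinvol hdich fun e => hc (Commute.inv_right_iff.mp e)
  have hconj : g * h * g⁻¹ = g⁻¹ * h * g := by
    rw [← eq_mul_inv_of_mul_eq h₁, eq_mul_inv_of_mul_eq h₂, inv_inv]
  calc h * g ^ 2 = g * (g⁻¹ * h * g) * g := by rw [sq]; group
    _ = g ^ 2 * h := by rw [← hconj, sq]; group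

end Group

theorem stmt_1 {F G : Type*} [Field F] [Group G] (h2 : (2 : F) ≠ 0)
    (st : G → G) (hanti : ∀ g h : G, st (g * h) = st h * st g)
    (hinvol : ∀ g : G, st (st g) = g)
    (hnormal : ∀ α : MonoidAlgebra F G, α * invMap st α = invMap st α * α) :
    ∀ g : G, g ^ 2 ∈ Subgroup.center G :=
  sq_mem_center_of_mul_st_dichotomy hanti hinvol (mul_st_eq_or_of_normal hnormal h2)
end

section
/- Let F be a field with char(F) ≠ 2 and G a non-abelian group with involution * extended to FG. If FG is normal, then G has a unique non-identity commutator s, which is central of order 2, and for every non-central g ∈ G one has g* = sg. -/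
/-!
Comparing coefficients in the polarized normality identity `g h* + h g* = g* h + h* g` (this is
where `char F ≠ 2` enters) shows that `{g h*, h g*} = {g* h, h* g}` as multisets, for all
`g h : G`. Applied to a non-commuting pair `g, h*` this forces `(g h)* = h g`, hence
`x* = y⁻¹ x y` whenever `x` and `y` do not commute. So `x⁻¹ x*` is the commutator of `x` with
any element not commuting with it; it squares to `1`, agrees for non-commuting `x, y`, and since
no group is a union of two proper centralizers it is the same element `s` for every non-central
`x`. As every non-central `x` commutes with `x*`, it commutes with `s`, so `s` is central.
-/

theorem mul_apply_add_mul_apply_eq_of_commute_apply {R : Type*} [Ring R] {f : R → R}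
    (hadd : ∀ a b, f (a + b) = f a + f b) (hnormal : ∀ a, Commute a (f a)) (a b : R) :
    a * f b + b * f a = f a * b + f b * a := by
  have h := (hnormal (a + b)).eq
  simp only [hadd, add_mul, mul_add, (hnormal a).eq, (hnormal b).eq] at h
  have : f a * a + (a * f b + b * f a) + f b * b = f a * a + (f a * b + f b * a) + f b * b := by
    convert h using 1 <;> abel
  exact add_left_cancel (add_right_cancel this)

theorem Subgroup.exists_not_commute_of_notMem_center {G : Type*} [Group G] {x y : G}
    (hx : x ∉ Subgroup.center G) (hy : y ∉ Subgroup.center G) :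
    ∃ z, ¬Commute x z ∧ ¬Commute y z := by
  simp only [Subgroup.mem_center_iff, not_forall] at hx hy
  obtain ⟨a, ha⟩ := hx
  obtain ⟨b, hb⟩ := hy
  by_cases hya : Commute y a
  · by_cases hxb : Commute x b
    · refine ⟨a * b, fun h => ?_, fun h => ?_⟩
      · exact ha (by simpa using (h.mul_right hxb.inv_right).symm.eq)
      · exact hb (by simpa using (hya.inv_right.mul_right h).symm.eq)
    · exact ⟨b, hxb, fun h => hb h.symm.eq⟩
  · exact ⟨a, fun h => ha h.symm.eq, hya⟩

structure IsNormalOnPairs {G : Type*} [Group G] (st : G → G) : Prop where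
  anti : ∀ g h, st (g * h) = st h * st g
  invol : ∀ g, st (st g) = g
  pair : ∀ g h, s(g * st h, h * st g) = s(st g * h, st h * g)

theorem isNormalOnPairs_of_normal {F G : Type*} [Field F] [Group G] (h2 : (2 : F) ≠ 0)
    {st : G → G} (hanti : ∀ g h : G, st (g * h) = st h * st g) (hinvol : ∀ g : G, st (st g) = g)
    (hnormal : ∀ α : MonoidAlgebra F G, α * invMap st α = invMap st α * α) :
    IsNormalOnPairs st := by
  refine ⟨hanti, hinvol, fun g h => ?_⟩
  have hsingle : ∀ x : G, invMap st (MonoidAlgebra.single x (1 : F)) =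
      MonoidAlgebra.single (st x) 1 := fun _ => MonoidAlgebra.mapDomain_single
  have key := mul_apply_add_mul_apply_eq_of_commute_apply
    (fun _ _ => MonoidAlgebra.mapDomain_add _ _ _) hnormal
    (MonoidAlgebra.single g (1 : F)) (MonoidAlgebra.single h 1)
  simp only [hsingle, MonoidAlgebra.single_mul_single, mul_one] at key
  rw [MonoidAlgebra.single_add_single_inj one_ne_zero one_ne_zero] at key
  rw [Sym2.eq_iff]
  rcases key with key | ⟨-, key⟩ | ⟨h11, -⟩
  · exact .inl key
  · exact .inr key
  · exact absurd (by rw [← h11]; norm_num) h2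

namespace IsNormalOnPairs

variable {G : Type*} [Group G] {st : G → G}

theorem commute_self (hst : IsNormalOnPairs st) (x : G) : Commute x (st x) := by
  rcases Sym2.eq_iff.1 (hst.pair x x) with ⟨h, -⟩ | ⟨h, -⟩ <;> exact h

theorem apply_mul_of_not_commute (hst : IsNormalOnPairs st) {g h : G} (hgh : ¬Commute g h) :
    st (g * h) = h * g := by
  rcases Sym2.eq_iff.1 (hst.pair g (st h)) with ⟨-, e⟩ | ⟨e, -⟩
  · rwa [hst.invol, ← hst.anti] at e
  · rw [hst.invol] at e
    exact absurd e hgh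

theorem apply_eq_conj (hst : IsNormalOnPairs st) {x y : G} (hxy : ¬Commute x y) :
    st x = y⁻¹ * x * y := by
  have hne : ¬Commute (x * y) y⁻¹ := fun h =>
    hxy (by simpa using (Commute.inv_right_iff.1 h).mul_left (Commute.refl y).inv_left)
  have := hst.apply_mul_of_not_commute hne
  rw [mul_inv_cancel_right] at this
  rw [this]; group

theorem inv_mul_apply_eq_commutator (hst : IsNormalOnPairs st) {x y : G} (hxy : ¬Commute x y) :
    x⁻¹ * st x = x⁻¹ * y⁻¹ * x * y := by
  rw [hst.apply_eq_conj hxy]; group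

theorem commute_mul_self (hst : IsNormalOnPairs st) {x y : G} (hxy : ¬Commute x y) :
    Commute (x * x) y := by
  have hx := hst.apply_eq_conj hxy
  have hy := hst.apply_eq_conj (fun h => hxy h.symm)
  rcases Sym2.eq_iff.1 (hst.pair x y) with ⟨-, e⟩ | ⟨e, -⟩
  · rw [hx, hy] at e
    calc x * x * y = x * (y * (y⁻¹ * x * y)) := by group
      _ = x * (x⁻¹ * y * x * x) := by rw [e]
      _ = y * (x * x) := by group
  · rw [hy] at e
    refine absurd (mul_right_cancel (b := x) ?_) hxy
    calc x * y * x = x * (x * (x⁻¹ * y * x)) := by group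
      _ = x * (x⁻¹ * y * x * x) := by rw [e]
      _ = y * x * x := by group

theorem inv_mul_apply_mul_self (hst : IsNormalOnPairs st) {x y : G} (hxy : ¬Commute x y) :
    x⁻¹ * st x * (x⁻¹ * st x) = 1 := by
  have hsq : st x * st x = x * x := by
    rw [hst.apply_eq_conj hxy]
    calc y⁻¹ * x * y * (y⁻¹ * x * y) = y⁻¹ * (x * x * y) := by group
      _ = y⁻¹ * (y * (x * x)) := by rw [(hst.commute_mul_self hxy).eq]
      _ = x * x := by group
  have hc := hst.commute_self x
  refine mul_left_cancel (a := x * x) ?_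
  calc x * x * (x⁻¹ * st x * (x⁻¹ * st x)) = x * st x * x⁻¹ * st x := by group
    _ = st x * x * x⁻¹ * st x := by rw [hc.eq]
    _ = st x * st x := by group
    _ = x * x * 1 := by rw [hsq, mul_one]

theorem inv_mul_apply_eq_of_not_commute (hst : IsNormalOnPairs st) {x y : G}
    (hxy : ¬Commute x y) : x⁻¹ * st x = y⁻¹ * st y := by
  have hyx : ¬Commute y x := fun h => hxy h.symm
  have hinv : x⁻¹ * st x * (y⁻¹ * st y) = 1 := by
    rw [hst.inv_mul_apply_eq_commutator hxy, hst.inv_mul_apply_eq_commutator hyx]; group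
  calc x⁻¹ * st x = x⁻¹ * st x * (y⁻¹ * st y * (y⁻¹ * st y)) := by
        rw [hst.inv_mul_apply_mul_self hyx, mul_one]
    _ = y⁻¹ * st y := by rw [← mul_assoc, hinv, one_mul]

theorem inv_mul_apply_eq_of_notMem_center (hst : IsNormalOnPairs st) {x y : G}
    (hx : x ∉ Subgroup.center G) (hy : y ∉ Subgroup.center G) : x⁻¹ * st x = y⁻¹ * st y := by
  obtain ⟨z, hxz, hyz⟩ := Subgroup.exists_not_commute_of_notMem_center hx hy
  exact (hst.inv_mul_apply_eq_of_not_commute hxz).trans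
    (hst.inv_mul_apply_eq_of_not_commute hyz).symm

theorem inv_mul_apply_mem_center (hst : IsNormalOnPairs st) {x : G}
    (hx : x ∉ Subgroup.center G) : x⁻¹ * st x ∈ Subgroup.center G := by
  refine Subgroup.mem_center_iff.2 fun z => ?_
  by_cases hz : z ∈ Subgroup.center G
  · exact (Subgroup.mem_center_iff.1 hz _).symm
  · rw [hst.inv_mul_apply_eq_of_notMem_center hx hz]
    exact ((Commute.refl z).inv_right.mul_right (hst.commute_self z)).eq

end IsNormalOnPairs

theorem stmt_3 {F G : Type*} [Field F] [Group G] (h2 : (2 : F) ≠ 0)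
    (hna : ∃ g h : G, g * h ≠ h * g)
    (st : G → G) (hanti : ∀ g h : G, st (g * h) = st h * st g)
    (hinvol : ∀ g : G, st (st g) = g)
    (hnormal : ∀ α : MonoidAlgebra F G, α * invMap st α = invMap st α * α) :
    ∃ s : G, s ≠ 1 ∧ s ∈ Subgroup.center G ∧ s * s = 1 ∧
      (∀ g h : G, g⁻¹ * h⁻¹ * g * h = 1 ∨ g⁻¹ * h⁻¹ * g * h = s) ∧
      (∃ g h : G, g⁻¹ * h⁻¹ * g * h = s) ∧
      (∀ g : G, g ∉ Subgroup.center G → st g = s * g) := by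
  have hst := isNormalOnPairs_of_normal h2 hanti hinvol hnormal
  have notMem_center : ∀ {g h : G}, ¬Commute g h → g ∉ Subgroup.center G :=
    fun hgh hg => hgh (Subgroup.mem_center_iff.1 hg _).symm
  obtain ⟨x, y, hxy⟩ := hna
  have hx : x ∉ Subgroup.center G := notMem_center hxy
  have hs : ∀ g ∉ Subgroup.center G, g⁻¹ * st g = x⁻¹ * st x :=
    fun g hg => hst.inv_mul_apply_eq_of_notMem_center hg hx
  refine ⟨x⁻¹ * st x, fun h1 => hxy ?_, hst.inv_mul_apply_mem_center hx,
    hst.inv_mul_apply_mul_self hxy, fun g h => ?_,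
    ⟨x, y, (hst.inv_mul_apply_eq_commutator hxy).symm⟩, fun g hg => ?_⟩
  · rw [hst.inv_mul_apply_eq_commutator hxy] at h1
    calc x * y = y * x * (x⁻¹ * y⁻¹ * x * y) := by group
      _ = y * x := by rw [h1, mul_one]
  · by_cases hgh : Commute g h
    · left; rw [hgh.inv_inv.eq]; group
    · right; rw [← hst.inv_mul_apply_eq_commutator hgh, hs g (notMem_center hgh)]
  · calc st g = g * (g⁻¹ * st g) := by group
      _ = g * (x⁻¹ * st x) := by rw [hs g hg]
      _ = x⁻¹ * st x * g := Subgroup.mem_center_iff.1 (hst.inv_mul_apply_mem_center hx) g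
end

section
/- Let F be a field with char(F) ≠ 2, G a group with non-trivial orientation σ : G → {±1} and involution *, and ⊛ the associated oriented group involution on FG. If FG is normal with respect to ⊛ (αα⊛ = α⊛α for all α), then for g, h ∈ G: if σ(g)σ(h) = 1 then gh = hg or gh = g*h*; and if σ(g)σ(h) = −1 then gh = hg or gh = (gh)*. -/
/-
Write elements of `G` for the corresponding basis vectors of `FG`. Expanding the normality of
`g + h*` and cancelling the diagonal terms `g g⊛` and `h* (h*)⊛` (each summand is normal on its
own) leaves `σ(h) gh + σ(g) h*g* = σ(g) g*h* + σ(h) hg`. Two such two-term sums with nonzero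
coefficients agree only if their terms match in order, match crosswise with equal coefficients,
or cancel pairwise with opposite coefficients. As `σ = ±1` and `2 ≠ 0`, the sign of `σ(g)σ(h)`
rules out one of the last two options, leaving exactly the alternatives of the theorem.
-/

/-- The oriented involution on the group algebra: `(Σ α_g g)⊛ = Σ α_g σ(g) g*`. -/
noncomputable def oinvMap {F G : Type*} [Field F] [Group G] (st : G → G) (σ : G → F) :
    MonoidAlgebra F G → MonoidAlgebra F G :=
  fun α => MonoidAlgebra.ofCoeff (Finsupp.sum α.coeff fun g c => Finsupp.single (st g) (σ g * c))

theorem add_mul_add_swap_of_commute {R : Type*} [Ring R] {a a' b b' : R}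
    (ha : Commute a a') (hb : Commute b b') (h : (a + b) * (a' + b') = (a' + b') * (a + b)) :
    a * b' + b * a' = a' * b + b' * a :=
  calc a * b' + b * a' = (a + b) * (a' + b') - a * a' - b * b' := by noncomm_ring
    _ = (a' + b') * (a + b) - a' * a - b' * b := by rw [h, ha.eq, hb.eq]
    _ = a' * b + b' * a := by noncomm_ring

section OrientedInvolution

open MonoidAlgebra

variable {F G : Type*} [Field F] [Group G]

theorem oinvMap_single (st : G → G) (σ : G → F) (g : G) (c : F) :
    oinvMap st σ (single g c) = single (st g) (σ g * c) := by
  unfold oinvMap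
  rw [coeff_single, Finsupp.sum_single_index (by simp)]
  rfl

theorem oinvMap_add (st : G → G) (σ : G → F) (α β : MonoidAlgebra F G) :
    oinvMap st σ (α + β) = oinvMap st σ α + oinvMap st σ β := by
  unfold oinvMap
  rw [coeff_add, Finsupp.sum_add_index' (by simp)
    (fun _ _ _ => by simp only [mul_add, Finsupp.single_add])]
  rfl

theorem single_add_single_eq_of_normal {st : G → G} {σ : G → F}
    (hnormal : ∀ α : MonoidAlgebra F G, α * oinvMap st σ α = oinvMap st σ α * α)
    (hinvol : ∀ g : G, st (st g) = g) (hst : ∀ g : G, σ (st g) = σ g) (g h : G) :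
    single (g * h) (σ h) + single (st h * st g) (σ g) =
      single (st g * st h) (σ g) + single (h * g) (σ h) := by
  have key := add_mul_add_swap_of_commute (hnormal (single g 1)) (hnormal (single (st h) 1))
    (by rw [← oinvMap_add]; exact hnormal _)
  simpa only [oinvMap_single, single_mul_single, hinvol, hst, mul_one, one_mul] using key

end OrientedInvolution

theorem stmt_10_general {F G : Type*} [Field F] [Group G] (h2 : (2 : F) ≠ 0)
    (st : G → G) (hanti : ∀ g h : G, st (g * h) = st h * st g)
    (hinvol : ∀ g : G, st (st g) = g)
    (σ : G → F) (hhom : ∀ g h : G, σ (g * h) = σ g * σ h)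
    (hval : ∀ g : G, σ g = 1 ∨ σ g = -1)
    (hker : ∀ g : G, σ (g * st g) = 1)
    (hnormal : ∀ α : MonoidAlgebra F G, α * oinvMap st σ α = oinvMap st σ α * α) :
    ∀ g h : G,
      (σ g * σ h = 1 → g * h = h * g ∨ g * h = st g * st h) ∧
      (σ g * σ h = -1 → g * h = h * g ∨ g * h = st (g * h)) := by
  have hsq (g : G) : σ g * σ g = 1 := mul_self_eq_one_iff.mpr (hval g)
  have hne (g : G) : σ g ≠ 0 := left_ne_zero_of_mul_eq_one (hsq g)
  have hst (g : G) : σ (st g) = σ g :=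
    mul_left_cancel₀ (hne g) (((hhom _ _).symm.trans (hker g)).trans (hsq g).symm)
  intro g h
  have key := single_add_single_eq_of_normal hnormal hinvol hst g h
  rw [add_comm (MonoidAlgebra.single (st g * st h) _),
    MonoidAlgebra.single_add_single_inj (hne h) (hne g)] at key
  constructor
  · intro hσ
    rcases key with ⟨hc, -⟩ | ⟨-, hgh, -⟩ | ⟨hsum, -, -⟩
    · exact Or.inl hc
    · exact Or.inr hgh
    · exact absurd (by linear_combination σ h * hsum - hσ - hsq h) h2
  · intro hσ
    rcases key with ⟨hc, -⟩ | ⟨heq, -, -⟩ | ⟨-, hgh, -⟩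
    · exact Or.inl hc
    · exact absurd (by linear_combination hσ - hsq g - σ g * heq) h2
    · exact Or.inr (hgh.trans (hanti g h).symm)

theorem stmt_10 {F G : Type*} [Field F] [Group G] (h2 : (2 : F) ≠ 0)
    (st : G → G) (hanti : ∀ g h : G, st (g * h) = st h * st g)
    (hinvol : ∀ g : G, st (st g) = g)
    (σ : G → F) (hhom : ∀ g h : G, σ (g * h) = σ g * σ h)
    (hval : ∀ g : G, σ g = 1 ∨ σ g = -1)
    (hnt : ∃ g : G, σ g = -1)
    (hker : ∀ g : G, σ (g * st g) = 1)
    (hnormal : ∀ α : MonoidAlgebra F G, α * oinvMap st σ α = oinvMap st σ α * α) :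
    ∀ g h : G,
      (σ g * σ h = 1 → g * h = h * g ∨ g * h = st g * st h) ∧
      (σ g * σ h = -1 → g * h = h * g ∨ g * h = st (g * h)) :=
  stmt_10_general h2 st hanti hinvol σ hhom hval hker hnormal
end

section
/- Let F be a field with char(F) ≠ 2, G a non-abelian group with non-trivial orientation σ and involution *, N = ker(σ). Suppose FG is normal with respect to the oriented involution ⊛ and N is abelian. Then x* = x for all x ∈ G \ N, and n* = a⁻¹na = ana⁻¹ for all n ∈ N and all a ∈ G \ N. -/
open MonoidAlgebra

theorem mul_add_mul_eq_of_forall_commute {R : Type*} [NonUnitalNonAssocRing R] {f : R → R}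
    (hf : ∀ x y, f (x + y) = f x + f y) (hnormal : ∀ x, x * f x = f x * x) (x y : R) :
    x * f y + y * f x = f x * y + f y * x := by
  have hxy := hnormal (x + y)
  simp only [hf, mul_add, add_mul, hnormal x, hnormal y] at hxy
  rw [← sub_eq_zero] at hxy ⊢
  rw [← hxy]
  abel

theorem orientation_ne_zero {G R : Type*} [Ring R] [Nontrivial R] {σ : G → R}
    (hval : ∀ g, σ g = 1 ∨ σ g = -1) (g : G) : σ g ≠ 0 := by
  rcases hval g with h | h <;> simp [h]

section

variable {F G : Type*} [Field F] [Group G]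

variable {st : G → G} {σ : G → F}

theorem mul_st_comm_of_normal_s13
    (hnormal : ∀ α : MonoidAlgebra F G, α * oinvMap st σ α = oinvMap st σ α * α)
    {g : G} (hg : σ g ≠ 0) : g * st g = st g * g := by
  have h := hnormal (single g 1)
  simp only [oinvMap_single, single_mul_single, mul_one, one_mul] at h
  exact (single_left_inj hg).1 h

theorem normal_single_trichotomy (hσ : ∀ g, σ g ≠ 0)
    (hnormal : ∀ α : MonoidAlgebra F G, α * oinvMap st σ α = oinvMap st σ α * α) (g h : G) :
    g * st h = st h * g ∧ h * st g = st g * h ∨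
      σ h = σ g ∧ g * st h = st g * h ∧ h * st g = st h * g ∨
      σ h + σ g = 0 ∧ g * st h = h * st g ∧ st h * g = st g * h := by
  have hgh := mul_add_mul_eq_of_forall_commute (oinvMap_add st σ) hnormal (single g 1)
    (single h 1)
  simp only [oinvMap_single, single_mul_single, mul_one, one_mul] at hgh
  rw [add_comm (single (st g * h) _)] at hgh
  exact (single_add_single_inj (hσ h) (hσ g)).1 hgh

theorem orientation_inv_mul_eq_one (hhom : ∀ g h, σ (g * h) = σ g * σ h)
    (hval : ∀ g, σ g = 1 ∨ σ g = -1) {g h : G} (hgh : σ g = σ h) : σ (g⁻¹ * h) = 1 :=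
  mul_left_cancel₀ (orientation_ne_zero hval g) (by rw [← hhom, mul_inv_cancel_left, mul_one, hgh])

theorem orientation_st (hhom : ∀ g h, σ (g * h) = σ g * σ h) (hval : ∀ g, σ g = 1 ∨ σ g = -1)
    (hker : ∀ g, σ (g * st g) = 1) (g : G) : σ (st g) = σ g := by
  have h := hker g
  rw [hhom] at h
  rcases hval g with hg | hg <;> rw [hg] at h ⊢
  · linear_combination h
  · linear_combination -h

theorem exists_orientation_eq_one_and_eq_or_eq_mul (hhom : ∀ g h, σ (g * h) = σ g * σ h)
    (hval : ∀ g, σ g = 1 ∨ σ g = -1) {b : G} (hb : σ b = -1) (g : G) :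
    ∃ m, σ m = 1 ∧ (m = g ∨ b * m = g) := by
  rcases hval g with hg | hg
  · exact ⟨g, hg, .inl rfl⟩
  · exact ⟨b⁻¹ * g, orientation_inv_mul_eq_one hhom hval (hb.trans hg.symm),
      .inr (mul_inv_cancel_left b g)⟩

theorem commute_of_commute_kernel (hhom : ∀ g h, σ (g * h) = σ g * σ h)
    (hval : ∀ g, σ g = 1 ∨ σ g = -1) (habN : ∀ m n, σ m = 1 → σ n = 1 → m * n = n * m)
    {b : G} (hb : σ b = -1) (hbN : ∀ n, σ n = 1 → Commute b n) (g h : G) : Commute g h := by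
  obtain ⟨m, hm, hg⟩ := exists_orientation_eq_one_and_eq_or_eq_mul hhom hval hb g
  obtain ⟨m', hm', hh⟩ := exists_orientation_eq_one_and_eq_or_eq_mul hhom hval hb h
  rcases hg with rfl | rfl <;> rcases hh with rfl | rfl
  · exact habN m m' hm hm'
  · exact (hbN m hm).symm.mul_right (habN m m' hm hm')
  · exact (hbN m' hm').mul_left (habN m m' hm hm')
  · exact ((Commute.refl b).mul_right (hbN m' hm')).mul_left
      ((hbN m hm).symm.mul_right (habN m m' hm hm'))

theorem commute_st_of_st_ne (h2 : (2 : F) ≠ 0) (hanti : ∀ g h, st (g * h) = st h * st g)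
    (hhom : ∀ g h, σ (g * h) = σ g * σ h) (hval : ∀ g, σ g = 1 ∨ σ g = -1)
    (hnormal : ∀ α : MonoidAlgebra F G, α * oinvMap st σ α = oinvMap st σ α * α)
    {n a : G} (hn : σ n = 1) (ha : σ a = -1) (hne : st a ≠ a) : Commute n (st a) := by
  have hσ := orientation_ne_zero hval
  have ha_comm := mul_st_comm_of_normal_s13 hnormal (hσ a)
  rcases normal_single_trichotomy hσ hnormal n a with ⟨hcomm, -⟩ | ⟨hσan, -⟩ | ⟨-, -, hsa⟩
  · exact hcomm
  · exact absurd (by linear_combination ha - hn - hσan) h2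
  have hσan : σ (a * n) = -1 := by rw [hhom, ha, hn, mul_one]
  rcases normal_single_trichotomy hσ hnormal a (a * n) with ⟨-, h⟩ | ⟨-, h, -⟩ | ⟨hsum, -⟩
  · refine mul_left_cancel (a := a) ?_
    calc a * (n * st a) = st a * (a * n) := by rw [← h, mul_assoc]
      _ = a * (st a * n) := by rw [← mul_assoc, ← ha_comm, mul_assoc]
  · rw [hanti] at h
    refine absurd (mul_left_cancel (a := st n) ?_) hne
    calc st n * st a = st a * n := by
          refine mul_left_cancel (a := a) ?_
          rw [h, ← mul_assoc, ← ha_comm, mul_assoc]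
      _ = st n * a := hsa
  · exact absurd (by linear_combination hσan + ha - hsum) h2

theorem st_eq_self_of_orientation_eq_neg_one (h2 : (2 : F) ≠ 0)
    (hna : ∃ g h : G, g * h ≠ h * g) (hanti : ∀ g h, st (g * h) = st h * st g)
    (hhom : ∀ g h, σ (g * h) = σ g * σ h) (hval : ∀ g, σ g = 1 ∨ σ g = -1)
    (hker : ∀ g, σ (g * st g) = 1)
    (hnormal : ∀ α : MonoidAlgebra F G, α * oinvMap st σ α = oinvMap st σ α * α)
    (habN : ∀ m n, σ m = 1 → σ n = 1 → m * n = n * m) {a : G} (ha : σ a = -1) : st a = a := by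
  by_contra hne
  obtain ⟨g, h, hgh⟩ := hna
  have hsta : σ (st a) = -1 := (orientation_st hhom hval hker a).trans ha
  exact hgh (commute_of_commute_kernel hhom hval habN hsta
    (fun n hn ↦ (commute_st_of_st_ne h2 hanti hhom hval hnormal hn ha hne).symm) g h)

end

theorem stmt_13_general {F G : Type*} [Field F] [Group G] (h2 : (2 : F) ≠ 0)
    (hna : ∃ g h : G, g * h ≠ h * g)
    (st : G → G) (hanti : ∀ g h : G, st (g * h) = st h * st g)
    (σ : G → F) (hhom : ∀ g h : G, σ (g * h) = σ g * σ h)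
    (hval : ∀ g : G, σ g = 1 ∨ σ g = -1)
    (hker : ∀ g : G, σ (g * st g) = 1)
    (hnormal : ∀ α : MonoidAlgebra F G, α * oinvMap st σ α = oinvMap st σ α * α)
    (habN : ∀ m n : G, σ m = 1 → σ n = 1 → m * n = n * m) :
    (∀ x : G, σ x = -1 → st x = x) ∧
      (∀ n a : G, σ n = 1 → σ a = -1 → st n = a⁻¹ * n * a ∧ st n = a * n * a⁻¹) := by
  have hfix : ∀ x : G, σ x = -1 → st x = x := fun x ↦
    st_eq_self_of_orientation_eq_neg_one h2 hna hanti hhom hval hker hnormal habN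
  refine ⟨hfix, fun n a hn ha ↦ ⟨?_, ?_⟩⟩
  · have hfix_na := hfix (n * a) (by rw [hhom, hn, ha, one_mul])
    rw [hanti, hfix a ha] at hfix_na
    rw [mul_assoc]
    exact eq_inv_mul_of_mul_eq hfix_na
  · have hfix_an := hfix (a * n) (by rw [hhom, hn, ha, mul_one])
    rw [hanti, hfix a ha] at hfix_an
    exact eq_mul_inv_of_mul_eq hfix_an

theorem stmt_13 {F G : Type*} [Field F] [Group G] (h2 : (2 : F) ≠ 0)
    (hna : ∃ g h : G, g * h ≠ h * g)
    (st : G → G) (hanti : ∀ g h : G, st (g * h) = st h * st g)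
    (hinvol : ∀ g : G, st (st g) = g)
    (σ : G → F) (hhom : ∀ g h : G, σ (g * h) = σ g * σ h)
    (hval : ∀ g : G, σ g = 1 ∨ σ g = -1)
    (hnt : ∃ g : G, σ g = -1)
    (hker : ∀ g : G, σ (g * st g) = 1)
    (hnormal : ∀ α : MonoidAlgebra F G, α * oinvMap st σ α = oinvMap st σ α * α)
    (habN : ∀ m n : G, σ m = 1 → σ n = 1 → m * n = n * m) :
    (∀ x : G, σ x = -1 → st x = x) ∧
      (∀ n a : G, σ n = 1 → σ a = -1 → st n = a⁻¹ * n * a ∧ st n = a * n * a⁻¹) :=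
  stmt_13_general h2 hna st hanti σ hhom hval hker hnormal habN
end

section
/- Let F be a field with char(F) ≠ 2 and G a non-abelian group with an LC index-2 subgroup N = ker(σ) and unique non-identity commutator s, such that there exists a central element g₀ ∈ G \ N with g₀* = sg₀, and * acts by g* = g for g ∈ N ∩ ζ(G) or g ∈ (G\N)\ζ(G), and g* = sg otherwise. Then FG is normal with respect to the oriented involution ⊛. -/
/-!
For every `g` and `c`, the element `c g + (c g)⊛ = c g + σ(g) c g*` is central in `FG`: if `g` is
central then so is `g* ∈ {g, s g}`; if `g ∉ ζ(G)` and `σ(g) = -1` it vanishes; and otherwise it is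
`c (g + s g)`, and `{g, s g}` is stable under conjugation because every commutator lies in `{1, s}`.
Summing over the support, `α + α⊛` is central, so `α` commutes with `α + α⊛` and hence with `α⊛`.
-/

theorem Commute.of_add_right {R : Type*} [Ring R] {a b : R} (h : Commute a (a + b)) :
    Commute a b := by
  simpa using h.sub_right (Commute.refl a)

theorem mul_eq_or_eq_mul_mul_of_commutator {G : Type*} [Group G] {s g h : G}
    (hsc : s ∈ Subgroup.center G) (hgh : g⁻¹ * h⁻¹ * g * h = 1 ∨ g⁻¹ * h⁻¹ * g * h = s) :
    g * h = h * g ∨ g * h = s * (h * g) := by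
  have hgh' : g * h = h * g * (g⁻¹ * h⁻¹ * g * h) := by group
  rcases hgh with hc | hc <;> rw [hc] at hgh'
  · exact .inl (by simpa using hgh')
  · exact .inr (hgh'.trans (Subgroup.mem_center_iff.mp hsc _))

namespace MonoidAlgebra

variable {k G : Type*} [CommSemiring k] [Monoid G]

theorem commute_of_forall_commute_single {x : MonoidAlgebra k G}
    (hx : ∀ g c, Commute x (single g c)) (y : MonoidAlgebra k G) : Commute x y :=
  y.induction_linear (.zero_right x) (fun _ _ => .add_right) hx

theorem commute_single_add_single_center_mul {s g h : G} (hsc : s ∈ Submonoid.center G)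
    (hs2 : s * s = 1) (hgh : g * h = h * g ∨ g * h = s * (h * g)) (c d : k) :
    Commute (single g c + single (s * g) c) (single h d) := by
  have hs : ∀ x, x * s = s * x := fun x => Submonoid.mem_center_iff.mp hsc x
  rcases hgh with hgh | hgh
  · have hsgh : s * g * h = h * (s * g) := by rw [mul_assoc, hgh, ← mul_assoc, ← hs, mul_assoc]
    exact (single_commute_single hgh (.all c d)).add_left (single_commute_single hsgh (.all c d))
  · -- conjugation by `h` swaps `g` and `s g`
    have h₁ : g * h = h * (s * g) := by rw [hgh, ← mul_assoc, ← hs, mul_assoc]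
    have h₂ : s * g * h = h * g := by rw [mul_assoc, hgh, ← mul_assoc, hs2, one_mul]
    simp only [Commute, SemiconjBy, add_mul, mul_add, single_mul_single, h₁, h₂, mul_comm c d]
    exact add_comm _ _

end MonoidAlgebra

open MonoidAlgebra

section

variable {F G : Type*} [Field F] [Group G] {st : G → G} {σ : G → F} {s : G}

theorem oinvMap_eq_sum (α : MonoidAlgebra F G) :
    oinvMap st σ α = α.coeff.sum fun g c => single (st g) (σ g * c) :=
  ofCoeff_finsuppSum _ _

theorem add_oinvMap_eq_sum (α : MonoidAlgebra F G) :
    α + oinvMap st σ α = α.coeff.sum fun g c => single g c + single (st g) (σ g * c) := by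
  rw [oinvMap_eq_sum, Finsupp.sum_add, sum_coeff_single]

theorem commute_single_add_oinv_single (hval : ∀ g : G, σ g = 1 ∨ σ g = -1)
    (hs2 : s * s = 1) (hsc : s ∈ Subgroup.center G)
    (hcomm : ∀ g h : G, g⁻¹ * h⁻¹ * g * h = 1 ∨ g⁻¹ * h⁻¹ * g * h = s)
    (hst1 : ∀ g : G,
      ((σ g = 1 ∧ g ∈ Subgroup.center G) ∨ (σ g = -1 ∧ g ∉ Subgroup.center G)) → st g = g)
    (hst2 : ∀ g : G,
      ¬((σ g = 1 ∧ g ∈ Subgroup.center G) ∨ (σ g = -1 ∧ g ∉ Subgroup.center G)) →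
        st g = s * g)
    (g : G) (c : F) (y : MonoidAlgebra F G) :
    Commute (single g c + single (st g) (σ g * c)) y := by
  have central_case (hg : g ∈ Subgroup.center G) (hstg : st g ∈ Subgroup.center G) :
      Commute (single g c + single (st g) (σ g * c)) y :=
    .add_left (single_commute (fun _ => Subgroup.mem_center_iff.mp hg _ |>.symm) (.all _) y)
      (single_commute (fun _ => Subgroup.mem_center_iff.mp hstg _ |>.symm) (.all _) y)
  by_cases hcond : (σ g = 1 ∧ g ∈ Subgroup.center G) ∨ (σ g = -1 ∧ g ∉ Subgroup.center G)
  · rw [hst1 g hcond] at central_case ⊢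
    rcases hcond with ⟨-, hg⟩ | ⟨hσ, -⟩
    · exact central_case hg hg
    · simp [hσ]
  · rw [hst2 g hcond] at central_case ⊢
    by_cases hg : g ∈ Subgroup.center G
    · exact central_case hg (Subgroup.mul_mem _ hsc hg)
    · have hσ : σ g = 1 := (hval g).resolve_right fun hσ => hcond (.inr ⟨hσ, hg⟩)
      rw [hσ, one_mul]
      exact commute_of_forall_commute_single (fun h d =>
        commute_single_add_single_center_mul (Subgroup.center_toSubmonoid G ▸ hsc) hs2
          (mul_eq_or_eq_mul_mul_of_commutator hsc (hcomm g h)) c d) y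

end

theorem stmt_18_general {F G : Type*} [Field F] [Group G]
    (st : G → G)
    (σ : G → F)
    (hval : ∀ g : G, σ g = 1 ∨ σ g = -1)
    (s : G) (hs2 : s * s = 1)
    (hsc : s ∈ Subgroup.center G)
    (hcomm : ∀ g h : G, g⁻¹ * h⁻¹ * g * h = 1 ∨ g⁻¹ * h⁻¹ * g * h = s)
    (hst1 : ∀ g : G,
      ((σ g = 1 ∧ g ∈ Subgroup.center G) ∨ (σ g = -1 ∧ g ∉ Subgroup.center G)) → st g = g)
    (hst2 : ∀ g : G,
      ¬((σ g = 1 ∧ g ∈ Subgroup.center G) ∨ (σ g = -1 ∧ g ∉ Subgroup.center G)) →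
        st g = s * g) :
    ∀ α : MonoidAlgebra F G, α * oinvMap st σ α = oinvMap st σ α * α := by
  intro α
  have hcentral : Commute α (α + oinvMap st σ α) := by
    rw [add_oinvMap_eq_sum]
    exact .sum_right _ _ _ fun g _ =>
      (commute_single_add_oinv_single hval hs2 hsc hcomm hst1 hst2 g _ α).symm
  exact hcentral.of_add_right

theorem stmt_18 {F G : Type*} [Field F] [Group G] (h2 : (2 : F) ≠ 0)
    (hna : ∃ g h : G, g * h ≠ h * g)
    (st : G → G) (hanti : ∀ g h : G, st (g * h) = st h * st g)
    (hinvol : ∀ g : G, st (st g) = g)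
    (σ : G → F) (hhom : ∀ g h : G, σ (g * h) = σ g * σ h)
    (hval : ∀ g : G, σ g = 1 ∨ σ g = -1)
    (hnt : ∃ g : G, σ g = -1)
    (s : G) (hsN : σ s = 1) (hs1 : s ≠ 1) (hs2 : s * s = 1)
    (hsc : s ∈ Subgroup.center G)
    (hGLC : ∀ g h : G, g * h = h * g ↔
      (g ∈ Subgroup.center G ∨ h ∈ Subgroup.center G ∨ g * h ∈ Subgroup.center G))
    (hcomm : ∀ g h : G, g⁻¹ * h⁻¹ * g * h = 1 ∨ g⁻¹ * h⁻¹ * g * h = s)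
    (hNna : ∃ m n : G, σ m = 1 ∧ σ n = 1 ∧ m * n ≠ n * m)
    (hNLC : ∀ m n : G, σ m = 1 → σ n = 1 → (m * n = n * m ↔
      ((∀ k : G, σ k = 1 → m * k = k * m) ∨ (∀ k : G, σ k = 1 → n * k = k * n) ∨
        (∀ k : G, σ k = 1 → (m * n) * k = k * (m * n)))))
    (g₀ : G) (hg₀ : σ g₀ = -1) (hg₀c : g₀ ∈ Subgroup.center G) (hg₀s : st g₀ = s * g₀)
    (hst1 : ∀ g : G,
      ((σ g = 1 ∧ g ∈ Subgroup.center G) ∨ (σ g = -1 ∧ g ∉ Subgroup.center G)) → st g = g)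
    (hst2 : ∀ g : G,
      ¬((σ g = 1 ∧ g ∈ Subgroup.center G) ∨ (σ g = -1 ∧ g ∉ Subgroup.center G)) →
        st g = s * g) :
    ∀ α : MonoidAlgebra F G, α * oinvMap st σ α = oinvMap st σ α * α :=
  stmt_18_general st σ hval s hs2 hsc hcomm hst1 hst2
end
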